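/- arXiv:2111.06931 — 3 statements merged into one kernel-verified Lean document; each statement's English description precedes it below -/
import Mathlib

section
/- For every integer n ≥ 1, the total quasi projector has the polynomial form Φ_n = Σ_{p=1}^n (−1)^{p−1} · vol_{n−p} · G^p. -/
open Matrix BigOperators Finset

/-- The submatrix of `A` formed by the rows indexed by the subset `S`. -/
def subMat {M N : ℕ} (A : Matrix (Fin M) (Fin N) ℝ) (S : Finset (Fin M)) :
    Matrix {i // i ∈ S} (Fin N) ℝ :=
  A.submatrix (fun i => (i : Fin M)) id

/-- The squared volume `v_S² = det (A_S A_Sᵀ)` of the parallelepiped spanned by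
the rows of `A` indexed by `S`. -/
noncomputable def volSq {M N : ℕ} (A : Matrix (Fin M) (Fin N) ℝ) (S : Finset (Fin M)) : ℝ :=
  (subMat A S * (subMat A S)ᵀ).det

/-- The quasi projector `Q_S = A_Sᵀ · adj(A_S A_Sᵀ) · A_S`. -/
noncomputable def quasiProj {M N : ℕ} (A : Matrix (Fin M) (Fin N) ℝ) (S : Finset (Fin M)) :
    Matrix (Fin N) (Fin N) ℝ :=
  (subMat A S)ᵀ * (subMat A S * (subMat A S)ᵀ).adjugate * subMat A S

/-- The total quasi projector `Φ_n = Σ_{|S| = n} Q_S`. -/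
noncomputable def totalQuasiProj {M N : ℕ} (A : Matrix (Fin M) (Fin N) ℝ) (n : ℕ) :
    Matrix (Fin N) (Fin N) ℝ :=
  ∑ S ∈ Finset.univ.powersetCard n, quasiProj A S

/-- The sum of squared `n`-volumes `vol_n = Σ_{|S| = n} v_S²` (with `vol_0 = 1`). -/
noncomputable def vol {M N : ℕ} (A : Matrix (Fin M) (Fin N) ℝ) (n : ℕ) : ℝ :=
  ∑ S ∈ Finset.univ.powersetCard n, volSq A S

/-!
Put `P_S := v_S² • 1 - Q_S`. Expanding column `j` of `adj G_S` by cofactors, which are again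
Gram determinants and quasi projectors of `S \ {j}`, gives `Q_S = Σ_{j ∈ S} P_{S \ {j}} a_j a_jᵀ`,
while `adj G_S · G_S = v_S² • 1` gives `P_S a_j = 0` for `j ∈ S`. Summing over `|S| = n + 1` and
regrouping by the pairs `(S \ {j}, j)` yields
`Φ_{n+1} = Σ_{|S| = n} Σ_j P_S a_j a_jᵀ = vol_n G - Φ_n G`,
and this recursion, started at `Φ_0 = 0`, is solved by the polynomial form.
-/

namespace Matrix

section Adjugate

variable {R : Type*} [CommRing R] {ι : Type*} [Fintype ι] [DecidableEq ι]

theorem det_updateRow_single_self (H : Matrix ι ι R) (j : ι) :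
    (H.updateRow j (Pi.single j 1)).det =
      (H.submatrix (Subtype.val : {k // k ≠ j} → ι) Subtype.val).det := by
  let e : {k // k ≠ j} ⊕ Unit ≃ ι :=
    (Equiv.optionEquivSumPUnit _).symm.trans (Equiv.optionSubtypeNe j)
  rw [← det_submatrix_equiv_self e]
  have hblocks : (H.updateRow j (Pi.single j 1)).submatrix e e =
      fromBlocks (H.submatrix Subtype.val Subtype.val) (of fun k _ => H k j) 0 1 := by
    ext (k | _) (l | _)
    · simp [e, updateRow_apply, k.2]
    · simp [e, updateRow_apply, k.2]
    · simp [e, l.2]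
    · simp [e]
  rw [hblocks, det_fromBlocks_zero₂₁, det_one, mul_one]

theorem adjugate_apply_self (H : Matrix ι ι R) (j : ι) :
    adjugate H j j = (H.submatrix (Subtype.val : {k // k ≠ j} → ι) Subtype.val).det := by
  rw [adjugate_apply, det_updateRow_single_self]

theorem adjugate_apply_of_ne (H : Matrix ι ι R) {k j : ι} (hkj : k ≠ j) :
    adjugate H k j = -(adjugate (H.submatrix (Subtype.val : {m // m ≠ j} → ι) Subtype.val) *ᵥ
      fun m => H m j) ⟨k, hkj⟩ := by
  rw [← cramer_eq_adjugate_mulVec, cramer_apply, adjugate_apply, eq_neg_iff_add_eq_zero]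
  -- swapping columns `j` and `k` turns row `j` into `Pi.single j 1`: the diagonal case
  have hswap : (H.updateRow j (Pi.single k 1)).submatrix id (Equiv.swap j k) =
      (H.submatrix id (Equiv.swap j k)).updateRow j (Pi.single j 1) := by
    ext m l
    by_cases hm : m = j
    · subst hm
      by_cases hl : l = m <;> by_cases hlk : l = k <;>
        simp [updateRow_apply, Equiv.swap_apply_def, hl, hlk, hkj]
    · simp [updateRow_apply, hm]
  have hminor : (H.submatrix id (Equiv.swap j k)).submatrix (Subtype.val : {m // m ≠ j} → ι)
      Subtype.val = (H.submatrix Subtype.val Subtype.val).updateCol (⟨k, hkj⟩ : {m // m ≠ j})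
        fun m => H m j := by
    ext m l
    by_cases hl : l = ⟨k, hkj⟩
    · subst hl; simp
    · have hlk : (l : ι) ≠ k := fun h => hl (Subtype.ext h)
      simp [hl, Equiv.swap_apply_of_ne_of_ne l.2 hlk]
  have := det_permute' (Equiv.swap j k) (H.updateRow j (Pi.single k 1))
  rw [hswap, det_updateRow_single_self, hminor, Equiv.Perm.sign_swap hkj.symm] at this
  rw [this]; push_cast; ring

end Adjugate

section Gram

variable {R : Type*} [CommRing R] {κ κ' ν : Type*}

theorem transpose_mul_eq_sum_vecMulVec [Fintype κ] {μ : Type*} (B : Matrix κ ν R)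
    (C : Matrix κ μ R) :
    Bᵀ * C = ∑ k, vecMulVec (B k) (C k) := by
  ext; simp [mul_apply, vecMulVec_apply, sum_apply]

variable [Fintype ν]

theorem submatrix_mul_transpose_submatrix_left (B : Matrix κ ν R) (f : κ' → κ) :
    B.submatrix f id * (B.submatrix f id)ᵀ = (B * Bᵀ).submatrix f f := by
  ext; simp [mul_apply]

variable [Fintype κ] [DecidableEq κ]

def gramQuasiProj (B : Matrix κ ν R) : Matrix ν ν R := Bᵀ * adjugate (B * Bᵀ) * B

theorem gramQuasiProj_mulVec_row (B : Matrix κ ν R) (k : κ) :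
    gramQuasiProj B *ᵥ B k = (B * Bᵀ).det • B k := by
  have hcol : B *ᵥ B k = (B * Bᵀ) *ᵥ Pi.single k 1 := by
    rw [mulVec_single_one]; ext; simp [mulVec, dotProduct, mul_apply, mul_comm]
  rw [gramQuasiProj, Matrix.mul_assoc, ← mulVec_mulVec, ← mulVec_mulVec, hcol,
    mulVec_mulVec _ (adjugate _), adjugate_mul, smul_mulVec, one_mulVec, mulVec_smul,
    mulVec_single_one]
  rfl

theorem gramQuasiProj_mul_vecMulVec_row (B : Matrix κ ν R) (k : κ) :
    gramQuasiProj B * vecMulVec (B k) (B k) = (B * Bᵀ).det • vecMulVec (B k) (B k) := by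
  rw [mul_vecMulVec, gramQuasiProj_mulVec_row, smul_vecMulVec]

variable [Fintype κ'] [DecidableEq κ']

theorem gramQuasiProj_submatrix_equiv (B : Matrix κ ν R) (e : κ' ≃ κ) :
    gramQuasiProj (B.submatrix e id) = gramQuasiProj B := by
  rw [gramQuasiProj, submatrix_mul_transpose_submatrix_left, adjugate_submatrix_equiv_self,
    transpose_submatrix, submatrix_mul_equiv, submatrix_mul_equiv, submatrix_id_id, gramQuasiProj]

theorem det_gram_submatrix_equiv (B : Matrix κ ν R) (e : κ' ≃ κ) :
    (B.submatrix e id * (B.submatrix e id)ᵀ).det = (B * Bᵀ).det := by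
  rw [submatrix_mul_transpose_submatrix_left, det_submatrix_equiv_self]

def eraseRow (B : Matrix κ ν R) (j : κ) : Matrix {k // k ≠ j} ν R :=
  B.submatrix Subtype.val id

theorem sum_adjugate_gram_apply_smul_row (B : Matrix κ ν R) (j : κ) :
    ∑ k, adjugate (B * Bᵀ) k j • B k =
      (B.eraseRow j * (B.eraseRow j)ᵀ).det • B j - gramQuasiProj (B.eraseRow j) *ᵥ B j := by
  have hgram : B.eraseRow j * (B.eraseRow j)ᵀ = (B * Bᵀ).submatrix Subtype.val Subtype.val :=
    submatrix_mul_transpose_submatrix_left B _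
  have hcol : B.eraseRow j *ᵥ B j = fun m : {k // k ≠ j} => (B * Bᵀ) m j := by
    ext m; simp [eraseRow, mulVec, dotProduct, mul_apply]
  rw [Fintype.sum_eq_add_sum_subtype_ne _ j, adjugate_apply_self, gramQuasiProj,
    Matrix.mul_assoc, ← mulVec_mulVec, ← mulVec_mulVec, hcol, hgram, mulVec_transpose,
    vecMul_eq_sum, sub_eq_add_neg, ← sum_neg_distrib]
  congr 1
  refine sum_congr rfl fun k _ => ?_
  rw [adjugate_apply_of_ne _ k.2, neg_smul]
  rfl

theorem gramQuasiProj_eq_sum [DecidableEq ν] (B : Matrix κ ν R) :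
    gramQuasiProj B = ∑ j, ((B.eraseRow j * (B.eraseRow j)ᵀ).det • 1 -
      gramQuasiProj (B.eraseRow j)) * vecMulVec (B j) (B j) := by
  have hcol (j : κ) : ((B.eraseRow j * (B.eraseRow j)ᵀ).det • 1 -
      gramQuasiProj (B.eraseRow j)) * vecMulVec (B j) (B j) =
      vecMulVec (∑ k, adjugate (B * Bᵀ) k j • B k) (B j) := by
    rw [sum_adjugate_gram_apply_smul_row, sub_mul, smul_mul_assoc, one_mul, mul_vecMulVec,
      sub_vecMulVec, smul_vecMulVec]
  simp_rw [hcol]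
  ext p q
  simp only [gramQuasiProj, mul_apply, transpose_apply, vecMulVec_apply, sum_apply,
    Finset.sum_apply, Pi.smul_apply, smul_eq_mul, Finset.sum_mul]
  exact sum_congr rfl fun j _ => sum_congr rfl fun i _ => by ring

end Gram

end Matrix

theorem Finset.sum_powersetCard_succ_sum_erase {α β : Type*} [DecidableEq α] [AddCommMonoid β]
    (s : Finset α) (n : ℕ) (f : Finset α → α → β) :
    ∑ R ∈ s.powersetCard (n + 1), ∑ j ∈ R, f (R.erase j) j =
      ∑ S ∈ s.powersetCard n, ∑ j ∈ s \ S, f S j := by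
  rw [sum_sigma', sum_sigma']
  refine sum_nbij' (fun x => ⟨x.1.erase x.2, x.2⟩) (fun x => ⟨insert x.2 x.1, x.2⟩)
    ?_ ?_ ?_ ?_ fun _ _ => rfl
  · rintro ⟨R, j⟩ h
    simp only [mem_sigma, mem_powersetCard, mem_sdiff] at h ⊢
    obtain ⟨⟨hRs, hR⟩, hj⟩ := h
    exact ⟨⟨(erase_subset j R).trans hRs, by rw [card_erase_of_mem hj, hR, Nat.add_sub_cancel]⟩,
      hRs hj, notMem_erase j R⟩
  · rintro ⟨S, j⟩ h
    simp only [mem_sigma, mem_powersetCard, mem_sdiff] at h ⊢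
    obtain ⟨⟨hSs, hS⟩, hjs, hjS⟩ := h
    exact ⟨⟨insert_subset hjs hSs, by rw [card_insert_of_notMem hjS, hS]⟩, mem_insert_self j S⟩
  · rintro ⟨R, j⟩ h
    simp only [mem_sigma] at h
    simp [insert_erase h.2]
  · rintro ⟨S, j⟩ h
    simp only [mem_sigma, mem_sdiff] at h
    simp [erase_insert h.2.2]

theorem sum_Icc_alternating_succ {R S : Type*} [CommRing R] [Ring S] [Algebra R S]
    (v : ℕ → R) (G : S) (n : ℕ) :
    ∑ p ∈ Icc 1 (n + 1), ((-1 : R) ^ (p - 1) * v (n + 1 - p)) • G ^ p =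
      v n • G - (∑ p ∈ Icc 1 n, ((-1 : R) ^ (p - 1) * v (n - p)) • G ^ p) * G := by
  have hshift (m : ℕ) (g : ℕ → S) : ∑ p ∈ Icc 1 m, g p = ∑ i ∈ range m, g (i + 1) := by
    rw [← Ico_add_one_right_eq_Icc, sum_Ico_eq_sum_range]
    simp [add_comm]
  rw [hshift, hshift, sum_range_succ', sum_mul, sub_eq_add_neg, ← sum_neg_distrib, add_comm]
  congr 1
  · simp
  · refine sum_congr rfl fun i _ => ?_
    rw [show n + 1 - (i + 1 + 1) = n - (i + 1) by omega, smul_mul_assoc, ← pow_succ, ← neg_smul]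
    simp [pow_succ]

section Subsets

variable {M N : ℕ} (A : Matrix (Fin M) (Fin N) ℝ)

theorem eraseRow_subMat {S : Finset (Fin M)} {j : Fin M} (hj : j ∈ S) :
    (subMat A S).eraseRow ⟨j, hj⟩ = (subMat A (S.erase j)).submatrix
      ((Equiv.subtypeEquivRight fun k => by simp [Subtype.ext_iff, k.2]).trans
        (Equiv.subtypeSubtypeEquivSubtype mem_of_mem_erase)) id :=
  rfl

theorem quasiProj_erase {S : Finset (Fin M)} {j : Fin M} (hj : j ∈ S) :
    quasiProj A (S.erase j) = gramQuasiProj ((subMat A S).eraseRow ⟨j, hj⟩) := by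
  rw [eraseRow_subMat, gramQuasiProj_submatrix_equiv]
  rfl

theorem volSq_erase {S : Finset (Fin M)} {j : Fin M} (hj : j ∈ S) :
    volSq A (S.erase j) =
      ((subMat A S).eraseRow ⟨j, hj⟩ * ((subMat A S).eraseRow ⟨j, hj⟩)ᵀ).det := by
  rw [eraseRow_subMat, det_gram_submatrix_equiv]
  rfl

theorem quasiProj_mul_vecMulVec_of_mem {S : Finset (Fin M)} {j : Fin M} (hj : j ∈ S) :
    quasiProj A S * vecMulVec (A j) (A j) = volSq A S • vecMulVec (A j) (A j) :=
  gramQuasiProj_mul_vecMulVec_row (subMat A S) ⟨j, hj⟩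

theorem quasiProj_eq_sum_erase (S : Finset (Fin M)) :
    quasiProj A S = ∑ j ∈ S,
      (volSq A (S.erase j) • 1 - quasiProj A (S.erase j)) * vecMulVec (A j) (A j) := by
  rw [← sum_attach, quasiProj, ← gramQuasiProj, gramQuasiProj_eq_sum]
  refine sum_congr rfl fun j _ => ?_
  rw [volSq_erase A j.2, quasiProj_erase A j.2]
  rfl

theorem totalQuasiProj_zero : totalQuasiProj A 0 = 0 := by
  ext
  simp [totalQuasiProj, quasiProj, mul_apply]

theorem totalQuasiProj_succ (n : ℕ) :
    totalQuasiProj A (n + 1) = vol A n • (Aᵀ * A) - totalQuasiProj A n * (Aᵀ * A) := by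
  set P : Finset (Fin M) → Matrix (Fin N) (Fin N) ℝ := fun S => volSq A S • 1 - quasiProj A S
  have hcancel (S : Finset (Fin M)) (j : Fin M) (hj : j ∈ S) :
      P S * vecMulVec (A j) (A j) = 0 := by
    rw [sub_mul, quasiProj_mul_vecMulVec_of_mem A hj, smul_mul_assoc, one_mul, sub_self]
  calc totalQuasiProj A (n + 1)
      = ∑ R ∈ univ.powersetCard (n + 1), ∑ j ∈ R, P (R.erase j) * vecMulVec (A j) (A j) :=
        sum_congr rfl fun R _ => quasiProj_eq_sum_erase A R
    _ = ∑ S ∈ univ.powersetCard n, ∑ j ∈ univ \ S, P S * vecMulVec (A j) (A j) :=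
        sum_powersetCard_succ_sum_erase _ _ fun S j => P S * vecMulVec (A j) (A j)
    _ = ∑ S ∈ univ.powersetCard n, ∑ j, P S * vecMulVec (A j) (A j) := by
        refine sum_congr rfl fun S _ => ?_
        rw [← sum_sdiff (subset_univ S), sum_eq_zero (hcancel S), add_zero]
    _ = ∑ S ∈ univ.powersetCard n, P S * (Aᵀ * A) := by
        simp_rw [← mul_sum, transpose_mul_eq_sum_vecMulVec]
    _ = vol A n • (Aᵀ * A) - totalQuasiProj A n * (Aᵀ * A) := by
        simp only [P, sub_mul, smul_mul_assoc, one_mul, sum_sub_distrib, ← sum_smul, ← sum_mul]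
        rfl

end Subsets

theorem totalQuasiProj_polynomial_form_general {M N : ℕ} (A : Matrix (Fin M) (Fin N) ℝ)
    {n : ℕ} :
    totalQuasiProj A n =
      ∑ p ∈ Finset.Icc 1 n, ((-1 : ℝ) ^ (p - 1) * vol A (n - p)) • (Aᵀ * A) ^ p := by
  induction n with
  | zero => simp [totalQuasiProj_zero]
  | succ n ih => rw [totalQuasiProj_succ, ih, sum_Icc_alternating_succ (vol A)]

/-- Polynomial form of the total quasi projector: for `n ≥ 1`,
`Φ_n = Σ_{p=1}^n (−1)^{p−1} vol_{n−p} G^p`, where `G = AᵀA`. -/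
theorem totalQuasiProj_polynomial_form {M N : ℕ} (A : Matrix (Fin M) (Fin N) ℝ)
    {n : ℕ} (hn : 1 ≤ n) :
    totalQuasiProj A n =
      ∑ p ∈ Finset.Icc 1 n, ((-1 : ℝ) ^ (p - 1) * vol A (n - p)) • (Aᵀ * A) ^ p :=
  totalQuasiProj_polynomial_form_general A
end

section
/- Suppose vol_n > 0 and let μ ∈ ℝ with 0 ≤ μ ≤ vol_n be such that xᵀ Φ_n x ≥ μ‖x‖² for all x ∈ ℝ^N. Then for every e₀ ∈ ℝ^N and every k ≥ 0, the expected squared error after k independent volume-sampled steps of the n-row pursuit satisfies Σ_{(S_1,…,S_k)} (Π_{j=1}^k v_{S_j}²/vol_n) · ‖R_{S_k} ⋯ R_{S_1} e₀‖² ≤ (1 − μ/vol_n)^k · ‖e₀‖², where the sum ranges over all k-tuples of n-element subsets of {1,…,M}. -/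
open Matrix BigOperators Finset

/-- Squared Euclidean norm of a vector in `ℝ^N`. -/
def normSq {N : ℕ} (x : Fin N → ℝ) : ℝ := ∑ i, x i ^ 2

/-- The rejection operator `R_S = I − Q_S / v_S²` when `v_S² ≠ 0`
(equal to `I − P_S` for linearly independent rows), and `R_S = I` otherwise. -/
noncomputable def rej {M N : ℕ} (A : Matrix (Fin M) (Fin N) ℝ) (S : Finset (Fin M)) :
    Matrix (Fin N) (Fin N) ℝ :=
  if volSq A S = 0 then 1 else 1 - (volSq A S)⁻¹ • quasiProj A S

/-!
Since `Q_S` is symmetric with `Q_S² = v_S² Q_S`, each `R_S` is an orthogonal projection and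
`v_S² ‖R_S e‖² = v_S² ‖e‖² − eᵀ Q_S e` (both sides vanish when `v_S² = 0`, as then `Q_S = 0`).
Summing over `S` gives the one-step bound
`Σ_S (v_S²/vol_n) ‖R_S e‖² = ‖e‖² − eᵀ Φ_n e / vol_n ≤ (1 − μ/vol_n) ‖e‖²`,
and conditioning on the first subset iterates it `k` times.
-/

lemma normSq_eq_dotProduct {N : ℕ} (x : Fin N → ℝ) : normSq x = x ⬝ᵥ x := by
  simp only [normSq, dotProduct, sq]

lemma normSq_mulVec {N : ℕ} (P : Matrix (Fin N) (Fin N) ℝ) (x : Fin N → ℝ) :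
    normSq (P *ᵥ x) = x ⬝ᵥ ((Pᵀ * P) *ᵥ x) := by
  rw [normSq_eq_dotProduct, ← mulVec_mulVec, dotProduct_mulVec x Pᵀ, vecMul_transpose]

section Rejection

variable {M N : ℕ} (A : Matrix (Fin M) (Fin N) ℝ) (S : Finset (Fin M))

lemma volSq_nonneg : 0 ≤ volSq A S := by
  have h := posSemidef_self_mul_conjTranspose (subMat A S)
  rw [conjTranspose_eq_transpose_of_trivial] at h
  exact h.det_nonneg

lemma quasiProj_eq_zero_of_volSq_eq_zero (h : volSq A S = 0) : quasiProj A S = 0 := by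
  set B := subMat A S
  have hB : (B * Bᵀ).adjugate * B = 0 := by
    refine (mul_self_mul_conjTranspose_eq_zero B (B * Bᵀ).adjugate).mp ?_
    rw [conjTranspose_eq_transpose_of_trivial, adjugate_mul]
    exact (congrArg (· • (1 : Matrix _ _ ℝ)) h).trans (zero_smul ℝ _)
  rw [quasiProj, Matrix.mul_assoc, hB, Matrix.mul_zero]

lemma transpose_quasiProj : (quasiProj A S)ᵀ = quasiProj A S := by
  rw [quasiProj, transpose_mul, transpose_mul, transpose_transpose, adjugate_transpose,
    transpose_mul, transpose_transpose, Matrix.mul_assoc]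

lemma quasiProj_mul_self : quasiProj A S * quasiProj A S = volSq A S • quasiProj A S := by
  simp only [quasiProj, volSq, Matrix.mul_assoc]
  rw [← Matrix.mul_assoc (subMat A S) (subMat A S)ᵀ,
    ← Matrix.mul_assoc (subMat A S * (subMat A S)ᵀ), mul_adjugate,
    smul_mul, Matrix.one_mul, Matrix.mul_smul, Matrix.mul_smul]

lemma transpose_rej_mul_rej : (rej A S)ᵀ * rej A S = rej A S := by
  by_cases h : volSq A S = 0
  · simp [rej, h]
  · rw [rej, if_neg h, transpose_sub, transpose_one, transpose_smul, transpose_quasiProj]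
    simp only [Matrix.sub_mul, Matrix.mul_sub, Matrix.one_mul, Matrix.mul_one, smul_mul,
      Matrix.mul_smul, quasiProj_mul_self, smul_smul, inv_mul_cancel₀ h, one_smul, sub_self, smul_zero, sub_zero]

lemma volSq_mul_normSq_rej_mulVec (e : Fin N → ℝ) :
    volSq A S * normSq (rej A S *ᵥ e) = volSq A S * normSq e - e ⬝ᵥ (quasiProj A S *ᵥ e) := by
  by_cases h : volSq A S = 0
  · simp [h, quasiProj_eq_zero_of_volSq_eq_zero A S h]
  · rw [normSq_mulVec, transpose_rej_mul_rej, rej, if_neg h, sub_mulVec, one_mulVec,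
      dotProduct_sub, smul_mulVec, dotProduct_smul, smul_eq_mul, ← normSq_eq_dotProduct,
      mul_sub, ← mul_assoc, mul_inv_cancel₀ h, one_mul]

end Rejection

lemma sum_volSq_mul_normSq_rej_mulVec {M N : ℕ} (A : Matrix (Fin M) (Fin N) ℝ) (n : ℕ)
    (e : Fin N → ℝ) :
    ∑ S ∈ univ.powersetCard n, volSq A S * normSq (rej A S *ᵥ e) =
      vol A n * normSq e - e ⬝ᵥ (totalQuasiProj A n *ᵥ e) := by
  simp only [volSq_mul_normSq_rej_mulVec, sum_sub_distrib, vol, totalQuasiProj, sum_mul,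
    sum_mulVec, dotProduct_sum]

lemma sum_volSq_div_mul_normSq_rej_mulVec_le {M N n : ℕ} (A : Matrix (Fin M) (Fin N) ℝ)
    (hvol : 0 < vol A n) (μ : ℝ)
    (hμ : ∀ x : Fin N → ℝ, μ * normSq x ≤ x ⬝ᵥ (totalQuasiProj A n *ᵥ x)) (e : Fin N → ℝ) :
    ∑ S ∈ univ.powersetCard n, volSq A S / vol A n * normSq (rej A S *ᵥ e) ≤
      (1 - μ / vol A n) * normSq e := by
  calc ∑ S ∈ univ.powersetCard n, volSq A S / vol A n * normSq (rej A S *ᵥ e)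
      = (vol A n * normSq e - e ⬝ᵥ (totalQuasiProj A n *ᵥ e)) / vol A n := by
        simp only [div_mul_eq_mul_div, ← sum_div, sum_volSq_mul_normSq_rej_mulVec]
    _ ≤ (vol A n * normSq e - μ * normSq e) / vol A n := by gcongr; exact hμ e
    _ = (1 - μ / vol A n) * normSq e := by field_simp

lemma sum_piFinset_const_succ {α β : Type*} [DecidableEq α] [AddCommMonoid β] (s : Finset α)
    (k : ℕ) (f : (Fin (k + 1) → α) → β) :
    ∑ T ∈ Fintype.piFinset (fun _ : Fin (k + 1) => s), f T =
      ∑ a ∈ s, ∑ T ∈ Fintype.piFinset (fun _ : Fin k => s), f (Fin.cons a T) := by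
  have h := filter_piFinset_eq_map_consEquiv (fun _ : Fin (k + 1) => s) (fun _ => True)
  rw [filter_true, filter_true] at h
  rw [h, sum_map, sum_product]
  rfl

/-- A one-step bound `E[V(R e)] ≤ c V(e)` for i.i.d. random matrices iterates to
`E[V(R_k ⋯ R_1 e)] ≤ c^k V(e)`. -/
theorem sum_prod_mul_listProd_mulVec_le {ι m : Type*} [Fintype m] [DecidableEq m] [DecidableEq ι]
    (s : Finset ι) (w : ι → ℝ) (hw : ∀ i ∈ s, 0 ≤ w i) (R : ι → Matrix m m ℝ)
    (V : (m → ℝ) → ℝ) (c : ℝ) (hc : 0 ≤ c)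
    (hstep : ∀ e, ∑ i ∈ s, w i * V (R i *ᵥ e) ≤ c * V e) (k : ℕ) (e : m → ℝ) :
    ∑ T ∈ Fintype.piFinset (fun _ : Fin k => s),
        (∏ j, w (T j)) * V ((List.ofFn fun j => R (T j)).reverse.prod *ᵥ e) ≤
      c ^ k * V e := by
  induction k generalizing e with
  | zero => simp
  | succ k ih =>
    calc ∑ T ∈ Fintype.piFinset (fun _ : Fin (k + 1) => s),
          (∏ j, w (T j)) * V ((List.ofFn fun j => R (T j)).reverse.prod *ᵥ e)
        = ∑ a ∈ s, w a * ∑ T ∈ Fintype.piFinset (fun _ : Fin k => s),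
            (∏ j, w (T j)) * V ((List.ofFn fun j => R (T j)).reverse.prod *ᵥ (R a *ᵥ e)) := by
          simp only [sum_piFinset_const_succ, Fin.prod_univ_succ, List.ofFn_succ, Fin.cons_zero,
            Fin.cons_succ, List.reverse_cons, List.prod_append, List.prod_cons, List.prod_nil,
            Matrix.mul_one, mulVec_mulVec, mul_sum, mul_assoc]
      _ ≤ ∑ a ∈ s, w a * (c ^ k * V (R a *ᵥ e)) :=
          sum_le_sum fun a ha => mul_le_mul_of_nonneg_left (ih _) (hw a ha)
      _ = c ^ k * ∑ a ∈ s, w a * V (R a *ᵥ e) := by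
          rw [mul_sum]; exact sum_congr rfl fun a _ => by ring
      _ ≤ c ^ k * (c * V e) := mul_le_mul_of_nonneg_left (hstep e) (pow_nonneg hc k)
      _ = c ^ (k + 1) * V e := by ring

theorem expected_exponential_convergence_general {M N n : ℕ}
    (A : Matrix (Fin M) (Fin N) ℝ) (hvol : 0 < vol A n) (μ : ℝ)
    (hμvol : μ ≤ vol A n)
    (hμ : ∀ x : Fin N → ℝ, μ * normSq x ≤ x ⬝ᵥ (totalQuasiProj A n *ᵥ x))
    (e₀ : Fin N → ℝ) (k : ℕ) :
    ∑ T ∈ Fintype.piFinset (fun _ : Fin k => Finset.univ.powersetCard n),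
        (∏ j, volSq A (T j) / vol A n) *
          normSq ((List.ofFn fun j => rej A (T j)).reverse.prod *ᵥ e₀) ≤
      (1 - μ / vol A n) ^ k * normSq e₀ :=
  sum_prod_mul_listProd_mulVec_le _ (fun S => volSq A S / vol A n)
    (fun S _ => div_nonneg (volSq_nonneg A S) hvol.le) (rej A) normSq _
    (sub_nonneg.mpr ((div_le_one hvol).mpr hμvol))
    (sum_volSq_div_mul_normSq_rej_mulVec_le A hvol μ hμ) k e₀

/-- Expected exponential convergence: if `vol_n > 0` and `0 ≤ μ ≤ vol_n` is a lower
bound on the quadratic form of `Φ_n`, then after `k` independent volume-sampled steps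
of the `n`-row pursuit the expected squared error satisfies
`Σ_{(S_1,…,S_k)} (Π_j v_{S_j}²/vol_n) ‖R_{S_k} ⋯ R_{S_1} e₀‖² ≤ (1 − μ/vol_n)^k ‖e₀‖²`. -/
theorem expected_exponential_convergence {M N n : ℕ}
    (A : Matrix (Fin M) (Fin N) ℝ) (hvol : 0 < vol A n) (μ : ℝ)
    (hμ0 : 0 ≤ μ) (hμvol : μ ≤ vol A n)
    (hμ : ∀ x : Fin N → ℝ, μ * normSq x ≤ x ⬝ᵥ (totalQuasiProj A n *ᵥ x))
    (e₀ : Fin N → ℝ) (k : ℕ) :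
    ∑ T ∈ Fintype.piFinset (fun _ : Fin k => Finset.univ.powersetCard n),
        (∏ j, volSq A (T j) / vol A n) *
          normSq ((List.ofFn fun j => rej A (T j)).reverse.prod *ᵥ e₀) ≤
      (1 - μ / vol A n) ^ k * normSq e₀ :=
  expected_exponential_convergence_general A hvol μ hμvol hμ e₀ k
end

section
/- Suppose vol_n > 0 and let v ∈ ℝ^N be an eigenvector of Φ_n with eigenvalue μ, i.e. Φ_n v = μ v, where 0 ≤ μ ≤ vol_n. Then for every k ≥ 0, the expected squared error after k independent volume-sampled steps of the n-row pursuit started at error v satisfies Σ_{(S_1,…,S_k)} (Π_{j=1}^k v_{S_j}²/vol_n) · ‖R_{S_k} ⋯ R_{S_1} v‖² ≥ (1 − μ/vol_n)^{2k} · ‖v‖², where the sum ranges over all k-tuples of n-element subsets of {1,…,M}. -/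
open Matrix BigOperators Finset

/-! ### Auxiliary lemmas -/

lemma volSq_nonneg_s12 {M N : ℕ} (A : Matrix (Fin M) (Fin N) ℝ) (S : Finset (Fin M)) :
    0 ≤ volSq A S := by
  have hps : (subMat A S * (subMat A S)ᴴ).PosSemidef :=
    Matrix.posSemidef_self_mul_conjTranspose _
  have hdet := hps.isHermitian.det_eq_prod_eigenvalues
  rw [volSq, ← Matrix.conjTranspose_eq_transpose_of_trivial, hdet]
  exact Finset.prod_nonneg fun i _ => hps.eigenvalues_nonneg i

lemma quasiProj_eq_zero {M N : ℕ} (A : Matrix (Fin M) (Fin N) ℝ) (S : Finset (Fin M))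
    (h : volSq A S = 0) : quasiProj A S = 0 := by
  set B := subMat A S with hB
  have h1 : (B * Bᵀ).adjugate * (B * Bᵀ) = 0 := by
    rw [Matrix.adjugate_mul]
    have : (B * Bᵀ).det = 0 := h
    rw [this, zero_smul]
  have h2 : ((B * Bᵀ).adjugate * B) = 0 := by
    rw [← Matrix.self_mul_conjTranspose_eq_zero (A := (B * Bᵀ).adjugate * B)]
    have hct : ((B * Bᵀ).adjugate * B)ᴴ = Bᵀ * ((B * Bᵀ).adjugate)ᵀ := by
      rw [Matrix.conjTranspose_eq_transpose_of_trivial, Matrix.transpose_mul]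
    rw [hct]
    calc (B * Bᵀ).adjugate * B * (Bᵀ * ((B * Bᵀ).adjugate)ᵀ)
        = ((B * Bᵀ).adjugate * (B * Bᵀ)) * ((B * Bᵀ).adjugate)ᵀ := by
          simp only [Matrix.mul_assoc]
      _ = 0 := by rw [h1, Matrix.zero_mul]
  rw [quasiProj, Matrix.mul_assoc, ← hB, h2, Matrix.mul_zero]

lemma sum_piFinset_cons {α β : Type*} [DecidableEq α] [AddCommMonoid β]
    (s : Finset α) (k : ℕ) (F : (Fin (k + 1) → α) → β) :
    ∑ T ∈ Fintype.piFinset (fun _ : Fin (k + 1) => s), F T =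
      ∑ a ∈ s, ∑ T ∈ Fintype.piFinset (fun _ : Fin k => s), F (Fin.cons a T) := by
  rw [Finset.sum_sigma']
  refine Finset.sum_bij' (fun T _ => ⟨T 0, Fin.tail T⟩)
    (fun p _ => Fin.cons p.1 p.2) ?_ ?_ ?_ ?_ ?_
  · intro T hT
    simp only [Fintype.mem_piFinset] at hT
    simp only [Finset.mem_sigma, Fintype.mem_piFinset]
    exact ⟨hT 0, fun i => hT i.succ⟩
  · intro p hp
    simp only [Finset.mem_sigma, Fintype.mem_piFinset] at hp
    simp only [Fintype.mem_piFinset]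
    intro i
    refine Fin.cases ?_ ?_ i
    · simpa using hp.1
    · intro j; simpa using hp.2 j
  · intro T hT; exact Fin.cons_self_tail T
  · intro p hp; simp [Fin.tail_cons]
  · intro T hT; rw [Fin.cons_self_tail]

lemma sum_mulVec' {N : ℕ} {α : Type*} (s : Finset α) (Ms : α → Matrix (Fin N) (Fin N) ℝ)
    (w : Fin N → ℝ) : (∑ a ∈ s, Ms a) *ᵥ w = ∑ a ∈ s, Ms a *ᵥ w := by
  ext i
  simp only [Matrix.mulVec, dotProduct, Finset.sum_apply, Matrix.sum_apply,
    Finset.sum_mul]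
  rw [Finset.sum_comm]

lemma sum_prob_smul_rej {M N : ℕ} (A : Matrix (Fin M) (Fin N) ℝ) (n : ℕ)
    (hvol : vol A n ≠ 0) :
    ∑ S ∈ Finset.univ.powersetCard n, (volSq A S / vol A n) • rej A S =
      1 - (vol A n)⁻¹ • totalQuasiProj A n := by
  have key : ∑ S ∈ Finset.univ.powersetCard n, volSq A S • rej A S =
      vol A n • (1 : Matrix (Fin N) (Fin N) ℝ) - totalQuasiProj A n := by
    rw [vol, totalQuasiProj, Finset.sum_smul, ← Finset.sum_sub_distrib]
    refine Finset.sum_congr rfl fun S _ => ?_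
    by_cases h : volSq A S = 0
    · simp [rej, h, quasiProj_eq_zero A S h]
    · rw [rej, if_neg h, smul_sub, smul_smul, mul_inv_cancel₀ h, one_smul]
  have : ∑ S ∈ Finset.univ.powersetCard n, (volSq A S / vol A n) • rej A S =
      (vol A n)⁻¹ • ∑ S ∈ Finset.univ.powersetCard n, volSq A S • rej A S := by
    rw [Finset.smul_sum]
    refine Finset.sum_congr rfl fun S _ => ?_
    rw [smul_smul, div_eq_inv_mul]
  rw [this, key, smul_sub, smul_smul, inv_mul_cancel₀ hvol, one_smul]

lemma expected_vec {M N : ℕ} (A : Matrix (Fin M) (Fin N) ℝ) (n : ℕ)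
    (hvol : vol A n ≠ 0) (k : ℕ) (w : Fin N → ℝ) :
    ∑ T ∈ Fintype.piFinset (fun _ : Fin k => Finset.univ.powersetCard n),
        (∏ j, volSq A (T j) / vol A n) •
          ((List.ofFn fun j => rej A (T j)).reverse.prod *ᵥ w) =
      (1 - (vol A n)⁻¹ • totalQuasiProj A n) ^ k *ᵥ w := by
  induction k generalizing w with
  | zero => simp [Matrix.one_mulVec]
  | succ k ih =>
    rw [sum_piFinset_cons]
    have step : ∀ a ∈ Finset.univ.powersetCard n,
        ∑ T ∈ Fintype.piFinset (fun _ : Fin k => Finset.univ.powersetCard n),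
          (∏ j, volSq A ((Fin.cons a T : Fin (k + 1) → Finset (Fin M)) j) / vol A n) •
            ((List.ofFn fun j => rej A ((Fin.cons a T : Fin (k + 1) → Finset (Fin M)) j)).reverse.prod *ᵥ w) =
        (1 - (vol A n)⁻¹ • totalQuasiProj A n) ^ k *ᵥ
          ((volSq A a / vol A n) • (rej A a *ᵥ w)) := by
      intro a _
      rw [Matrix.mulVec_smul, ← ih (rej A a *ᵥ w), Finset.smul_sum]
      refine Finset.sum_congr rfl fun T _ => ?_
      have hprod : (∏ j, volSq A ((Fin.cons a T : Fin (k + 1) → Finset (Fin M)) j) / vol A n) =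
          (volSq A a / vol A n) * ∏ j, volSq A (T j) / vol A n := by
        rw [Fin.prod_univ_succ]
        simp [Fin.cons_succ]
      have hlist : (List.ofFn fun j => rej A ((Fin.cons a T : Fin (k + 1) → Finset (Fin M)) j)) =
          rej A a :: (List.ofFn fun j => rej A (T j)) := by
        rw [List.ofFn_succ]
        simp [Fin.cons_succ]
      rw [hprod, hlist, List.reverse_cons, List.prod_append, List.prod_singleton,
        ← Matrix.mulVec_mulVec, mul_smul]
    rw [Finset.sum_congr rfl step]
    have hmap := map_sum ((1 - (vol A n)⁻¹ • totalQuasiProj A n) ^ k).mulVecLin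
      (fun a => (volSq A a / vol A n) • (rej A a *ᵥ w)) (Finset.univ.powersetCard n)
    simp only [Matrix.mulVecLin_apply] at hmap
    rw [← hmap]
    have hsum : (∑ a ∈ Finset.univ.powersetCard n,
        (volSq A a / vol A n) • (rej A a *ᵥ w)) =
        (1 - (vol A n)⁻¹ • totalQuasiProj A n) *ᵥ w := by
      rw [← sum_prob_smul_rej A n hvol, sum_mulVec']
      exact Finset.sum_congr rfl fun a _ => (Matrix.smul_mulVec _ _ _).symm
    rw [hsum, Matrix.mulVec_mulVec, ← pow_succ]

lemma eigen_pow {M N : ℕ} (A : Matrix (Fin M) (Fin N) ℝ) (n : ℕ)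
    (v : Fin N → ℝ) (μ : ℝ) (hv : totalQuasiProj A n *ᵥ v = μ • v) (m : ℕ) :
    (1 - (vol A n)⁻¹ • totalQuasiProj A n) ^ m *ᵥ v = (1 - μ / vol A n) ^ m • v := by
  induction m with
  | zero => simp [Matrix.one_mulVec]
  | succ m ihm =>
    have hBv : (1 - (vol A n)⁻¹ • totalQuasiProj A n) *ᵥ v = (1 - μ / vol A n) • v := by
      rw [Matrix.sub_mulVec, Matrix.one_mulVec, Matrix.smul_mulVec, hv, smul_smul,
        sub_smul, one_smul]
      congr 1
      ring_nf
    rw [pow_succ, ← Matrix.mulVec_mulVec, hBv, Matrix.mulVec_smul, ihm, smul_smul,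
      ← pow_succ']

/-- Lower bound on the expected squared error: if `vol_n > 0` and `v` is an
eigenvector of `Φ_n` with eigenvalue `μ`, `0 ≤ μ ≤ vol_n`, then after `k`
independent volume-sampled steps of the `n`-row pursuit started at error `v`,
`Σ_{(S_1,…,S_k)} (Π_j v_{S_j}²/vol_n) ‖R_{S_k} ⋯ R_{S_1} v‖² ≥ (1 − μ/vol_n)^{2k} ‖v‖²`. -/
theorem expected_squared_error_lower_bound {M N n : ℕ}
    (A : Matrix (Fin M) (Fin N) ℝ) (hvol : 0 < vol A n)
    (v : Fin N → ℝ) (μ : ℝ) (hv : totalQuasiProj A n *ᵥ v = μ • v)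
    (hμ0 : 0 ≤ μ) (hμvol : μ ≤ vol A n) (k : ℕ) :
    (1 - μ / vol A n) ^ (2 * k) * normSq v ≤
      ∑ T ∈ Fintype.piFinset (fun _ : Fin k => Finset.univ.powersetCard n),
        (∏ j, volSq A (T j) / vol A n) *
          normSq ((List.ofFn fun j => rej A (T j)).reverse.prod *ᵥ v) := by
  have hvol' : vol A n ≠ 0 := ne_of_gt hvol
  set P := Fintype.piFinset (fun _ : Fin k => (Finset.univ : Finset (Fin M)).powersetCard n) with hP
  set p : (Fin k → Finset (Fin M)) → ℝ := fun T => ∏ j, volSq A (T j) / vol A n with hp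
  set x : (Fin k → Finset (Fin M)) → Fin N → ℝ :=
    fun T => (List.ofFn fun j => rej A (T j)).reverse.prod *ᵥ v with hx
  have hpnn : ∀ T, 0 ≤ p T := fun T =>
    Finset.prod_nonneg fun j _ => div_nonneg (volSq_nonneg_s12 A (T j)) hvol.le
  have hpsum : ∑ T ∈ P, p T = 1 := by
    have h1 : ∑ T ∈ P, p T =
        ∏ _j : Fin k, ∑ S ∈ (Finset.univ : Finset (Fin M)).powersetCard n,
          volSq A S / vol A n :=
      (Finset.prod_univ_sum _ fun _ S => volSq A S / vol A n).symm
    have h2 : ∑ S ∈ (Finset.univ : Finset (Fin M)).powersetCard n,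
        volSq A S / vol A n = 1 := by
      rw [← Finset.sum_div, ← vol, div_self hvol']
    rw [h1, Finset.prod_congr rfl fun j _ => h2, Finset.prod_const_one]
  have hexp : ∑ T ∈ P, p T • x T = (1 - μ / vol A n) ^ k • v := by
    rw [hP, hp, hx, expected_vec A n hvol' k v, eigen_pow A n v μ hv]
  -- Jensen / Cauchy-Schwarz, coordinatewise
  have jensen : normSq (∑ T ∈ P, p T • x T) ≤ ∑ T ∈ P, p T * normSq (x T) := by
    unfold normSq
    have hrhs : ∑ T ∈ P, p T * ∑ i, x T i ^ 2 = ∑ i, ∑ T ∈ P, p T * x T i ^ 2 := by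
      rw [Finset.sum_comm]
      exact Finset.sum_congr rfl fun T _ => Finset.mul_sum _ _ _
    rw [hrhs]
    refine Finset.sum_le_sum fun i _ => ?_
    have happ : (∑ T ∈ P, p T • x T) i = ∑ T ∈ P, p T * x T i := by
      rw [Finset.sum_apply]
      rfl
    rw [happ]
    have := sum_sq_le_sum_mul_sum_of_sq_eq_mul P
      (r := fun T => p T * x T i) (f := fun T => p T) (g := fun T => p T * x T i ^ 2)
      (fun T _ => hpnn T) (fun T _ => mul_nonneg (hpnn T) (sq_nonneg _))
      (fun T _ => by ring)
    rwa [hpsum, one_mul] at this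
  have hlhs : normSq ((1 - μ / vol A n) ^ k • v) = (1 - μ / vol A n) ^ (2 * k) * normSq v := by
    unfold normSq
    rw [Finset.mul_sum]
    refine Finset.sum_congr rfl fun i _ => ?_
    rw [Pi.smul_apply, smul_eq_mul, mul_pow, ← pow_mul]
    ring_nf
  calc (1 - μ / vol A n) ^ (2 * k) * normSq v
      = normSq (∑ T ∈ P, p T • x T) := by rw [hexp, hlhs]
    _ ≤ ∑ T ∈ P, p T * normSq (x T) := jensen
end
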